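/- arXiv:2506.14279 — 2 statements merged into one kernel-verified Lean document; each statement's English description precedes it below -/
import Mathlib

section
/- Let G be an abelian group, G₀ ⊆ G a subset, and H = B±(G₀). If D(H) is finite, then every element of the set of minimal distances Δ*(H) is at most D(H) − 2; that is, max Δ*(H) ≤ D(H) − 2. -/
open Multiset

variable {G : Type*} [AddCommGroup G]

/-- `S` is a plus-minus weighted zero-sum sequence: `S` splits as `S₁ + S₂` with
`S₁.sum = S₂.sum`, i.e. some choice of signs `ε_i ∈ {+1, -1}` makes the weighted sum vanish. -/
def IsPMZeroSum (S : Multiset G) : Prop :=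
  ∃ S₁ S₂ : Multiset G, S = S₁ + S₂ ∧ S₁.sum = S₂.sum

/-- The monoid `B±(G₀)` of plus-minus weighted zero-sum sequences over `G₀ ⊆ G`, as an
additive submonoid of the free commutative monoid `Multiset G` of sequences over `G`. -/
def PMZS (G₀ : Set G) : AddSubmonoid (Multiset G) where
  carrier := {S | (∀ g ∈ S, g ∈ G₀) ∧ IsPMZeroSum S}
  zero_mem' := ⟨fun g hg => absurd hg (Multiset.notMem_zero g), 0, 0, by simp, rfl⟩
  add_mem' := by
    rintro S T ⟨hS, S₁, S₂, rfl, h12⟩ ⟨hT, T₁, T₂, rfl, h34⟩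
    exact ⟨fun g hg => (Multiset.mem_add.mp hg).elim (fun h => hS g h) (fun h => hT g h),
      S₁ + T₁, S₂ + T₂, add_add_add_comm S₁ S₂ T₁ T₂, by simp [h12, h34]⟩

/-- `A` is an atom (irreducible element) of the submonoid `H` of `Multiset G`. -/
def IsPMAtom (H : AddSubmonoid (Multiset G)) (A : Multiset G) : Prop :=
  A ∈ H ∧ A ≠ 0 ∧ ∀ B C : Multiset G, B ∈ H → C ∈ H → A = B + C → B = 0 ∨ C = 0

/-- The set of lengths `L(a)` of `a` in `H`: all `k` such that `a` is a sum of `k` atoms of `H`. -/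
def LengthSet (H : AddSubmonoid (Multiset G)) (a : Multiset G) : Set ℕ :=
  {k | ∃ l : List (Multiset G), (∀ A ∈ l, IsPMAtom H A) ∧ l.sum = a ∧ l.length = k}

/-- The set of successive distances `Δ(L)` of a set `L ⊆ ℕ`. -/
def DistSet (L : Set ℕ) : Set ℕ :=
  {d | 0 < d ∧ ∃ a ∈ L, a + d ∈ L ∧ ∀ b ∈ L, a < b → a + d ≤ b}

/-- The set of distances `Δ(H) = ⋃_{a ∈ H} Δ(L(a))`. -/
def DeltaM (H : AddSubmonoid (Multiset G)) : Set ℕ :=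
  {d | ∃ a ∈ H, d ∈ DistSet (LengthSet H a)}

/-- `a` divides `b` in `H`. -/
def DvdIn (H : AddSubmonoid (Multiset G)) (a b : Multiset G) : Prop :=
  ∃ c ∈ H, b = a + c

/-- `S` is a divisor-closed submonoid of `H`. -/
def IsDivClosed (H S : AddSubmonoid (Multiset G)) : Prop :=
  S ≤ H ∧ ∀ s ∈ S, ∀ a ∈ H, DvdIn H a s → a ∈ S

/-- The set of minimal distances
`Δ*(H) = {min Δ(S) : S a divisor-closed submonoid of H with Δ(S) ≠ ∅}`. -/
def DeltaStar (H : AddSubmonoid (Multiset G)) : Set ℕ :=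
  {d | ∃ S : AddSubmonoid (Multiset G), IsDivClosed H S ∧ (DeltaM S).Nonempty ∧ d = sInf (DeltaM S)}

/-- The set of lengths of atoms of `H`. -/
def AtomLengths (H : AddSubmonoid (Multiset G)) : Set ℕ :=
  {n | ∃ A : Multiset G, IsPMAtom H A ∧ Multiset.card A = n}

/-- The Davenport constant `D(H)` of `H`: the supremum of the lengths of the atoms of `H`.  -/
noncomputable def DavD (H : AddSubmonoid (Multiset G)) : ℕ :=
  sSup (AtomLengths H)

/-- The system of sets of lengths `L(H)` of `H`. -/
def LSys (H : AddSubmonoid (Multiset G)) : Set (Set ℕ) :=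
  {L | ∃ a ∈ H, L = LengthSet H a}

/-- `d` is the greatest common divisor of the set `S` of integers. -/
def IsSetGCD (S : Set ℤ) (d : ℕ) : Prop :=
  (∀ x ∈ S, (d : ℤ) ∣ x) ∧ ∀ c : ℕ, (∀ x ∈ S, (c : ℤ) ∣ x) → c ∣ d

/-- A family `e` of elements of an abelian group is independent if `∑ c i • e i = 0`
with integer coefficients implies `c i • e i = 0` for each `i`. -/
def IsIndepFamily {k : ℕ} (e : Fin k → G) : Prop :=
  ∀ c : Fin k → ℤ, ∑ i, c i • e i = 0 → ∀ i, c i • e i = 0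

/-- The (classical) Davenport constant of the abelian group `G`: the smallest `ℓ` such that
every sequence over `G` of length at least `ℓ` has a nonempty zero-sum subsequence. -/
noncomputable def DavenportGroup (G : Type*) [AddCommGroup G] : ℕ :=
  sInf {ℓ | ∀ S : Multiset G, ℓ ≤ Multiset.card S → ∃ T, T ≤ S ∧ T ≠ 0 ∧ T.sum = 0}

/-!
Let `S` be a divisor-closed submonoid of `B±(G₀)` with `Δ(S) ≠ ∅`. The only atom containing `0`
is the sequence `0` itself, so an atom `A` of length at most `2` satisfies `v₀(A) + |A| = 2`. If
all atoms of `S` were that short, every factorization of `a` would have length `(v₀(a) + |a|)/2`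
and `Δ(S)` would be empty. Hence `S` has an atom `A` with `|A| ≥ 3`, whose terms are nonzero.
Every `g g` with `g ∈ A` divides `A A`, hence is an atom of `S`, so `A A = ∏_{g ∈ A} g g` has
the lengths `2` and `|A|`, and `L(A A)` has a gap of size at most `|A| - 2 ≤ D(H) - 2`.
-/

theorem distSet_eq_empty_of_subsingleton {L : Set ℕ} (hL : L.Subsingleton) : DistSet L = ∅ :=
  Set.eq_empty_of_forall_notMem fun _ ⟨hd, _, ha, had, _⟩ => by
    have := hL ha had
    omega

theorem exists_mem_distSet_le_sub {L : Set ℕ} {x y : ℕ} (hx : x ∈ L) (hy : y ∈ L)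
    (hxy : x < y) : ∃ d ∈ DistSet L, d ≤ y - x := by
  set T := {b ∈ L | b < y}
  have hT : BddAbove T := ⟨y, fun b hb => hb.2.le⟩
  have haT : sSup T ∈ T := Nat.sSup_mem ⟨x, hx, hxy⟩ hT
  have hxa : x ≤ sSup T := le_csSup hT ⟨hx, hxy⟩
  set a := sSup T
  set U := {b ∈ L | a < b}
  have hyU : y ∈ U := ⟨hy, haT.2⟩
  have hbU : sInf U ∈ U := Nat.sInf_mem ⟨y, hyU⟩
  have hby : sInf U ≤ y := Nat.sInf_le hyU
  have hab : a < sInf U := hbU.2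
  refine ⟨sInf U - a, ⟨by omega, a, haT.1, ?_, fun b hb hab' => ?_⟩, by omega⟩
  · rw [Nat.add_sub_cancel' hab.le]
    exact hbU.1
  · have := Nat.sInf_le (show b ∈ U from ⟨hb, hab'⟩)
    omega

section Atoms

variable {α : Type*} {H S : AddSubmonoid (Multiset α)} {A : Multiset α}

theorem IsPMAtom.of_isDivClosed (hdc : IsDivClosed H S) (hA : IsPMAtom S A) : IsPMAtom H A := by
  obtain ⟨hAS, hA0, hmin⟩ := hA
  refine ⟨hdc.1 hAS, hA0, fun B C hB hC hBC => hmin B C ?_ ?_ hBC⟩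
  · exact hdc.2 A hAS B hB ⟨C, hC, hBC⟩
  · exact hdc.2 A hAS C hC ⟨B, hB, hBC.trans (add_comm B C)⟩

theorem IsPMAtom.of_le (hle : S ≤ H) (hAS : A ∈ S) (hA : IsPMAtom H A) : IsPMAtom S A :=
  ⟨hAS, hA.2.1, fun B C hB hC => hA.2.2 B C (hle hB) (hle hC)⟩

theorem two_mem_lengthSet_add_self (hA : IsPMAtom S A) : 2 ∈ LengthSet S (A + A) :=
  ⟨[A, A], by simp [hA], by simp, rfl⟩

end Atoms

section PlusMinus

variable {G₀ : Set G} {A : Multiset G}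

theorem eq_zero_of_isPMZeroSum_singleton {g : G} (h : IsPMZeroSum ({g} : Multiset G)) :
    g = 0 := by
  obtain ⟨S₁, S₂, hS, hsum⟩ := h
  have hcard : card S₁ + card S₂ = 1 := by simpa using congrArg card hS.symm
  rcases Nat.eq_zero_or_pos (card S₁) with h1 | h1
  · obtain rfl := card_eq_zero.mp h1
    rw [zero_add] at hS
    simpa [← hS] using hsum.symm
  · obtain rfl := card_eq_zero.mp (show card S₂ = 0 by omega)
    rw [add_zero] at hS
    simpa [← hS] using hsum

theorem IsPMZeroSum.of_zero_cons {T : Multiset G} (h : IsPMZeroSum (0 ::ₘ T)) :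
    IsPMZeroSum T := by
  obtain ⟨S₁, S₂, hS, hsum⟩ := h
  rcases mem_add.mp (hS ▸ mem_cons_self 0 T) with h0 | h0
  · obtain ⟨S₁, rfl⟩ := exists_cons_of_mem h0
    rw [cons_add, cons_inj_right] at hS
    exact ⟨S₁, S₂, hS, by simpa using hsum⟩
  · obtain ⟨S₂, rfl⟩ := exists_cons_of_mem h0
    rw [add_cons, cons_inj_right] at hS
    exact ⟨S₁, S₂, hS, by simpa using hsum⟩

theorem add_self_mem_PMZS {T : Multiset G} (hT : ∀ g ∈ T, g ∈ G₀) : T + T ∈ PMZS G₀ :=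
  ⟨fun g hg => (mem_add.mp hg).elim (hT g) (hT g), T, T, rfl, rfl⟩

theorem eq_singleton_zero_of_isPMAtom (hA : IsPMAtom (PMZS G₀) A) (h0 : (0 : G) ∈ A) :
    A = {0} := by
  obtain ⟨hAG₀, hApm⟩ := hA.1
  obtain ⟨A', rfl⟩ := exists_cons_of_mem h0
  have hzero : ({0} : Multiset G) ∈ PMZS G₀ :=
    ⟨by simpa using hAG₀ 0 h0, {0}, 0, rfl, by simp⟩
  have hA' : A' ∈ PMZS G₀ :=
    ⟨fun g hg => hAG₀ g (mem_cons_of_mem hg), hApm.of_zero_cons⟩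
  rcases hA.2.2 _ _ hzero hA' (singleton_add 0 A').symm with h | rfl
  · simp at h
  · rfl

theorem isPMAtom_pair {g : G} (hg : g ∈ G₀) (hg0 : g ≠ 0) :
    IsPMAtom (PMZS G₀) ({g} + {g}) := by
  refine ⟨add_self_mem_PMZS (by simpa using hg), by simp, fun B C hB _ hBC => ?_⟩
  by_contra! hne
  have hcard : card B + card C = 2 := by simpa using congrArg card hBC.symm
  have := card_pos.mpr hne.1
  have := card_pos.mpr hne.2
  obtain ⟨x, rfl⟩ := card_eq_one.mp (show card B = 1 by omega)
  have hxg : x ∈ ({g} + {g} : Multiset G) := hBC ▸ mem_add.mpr (Or.inl (mem_singleton_self x))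
  rw [mem_add, mem_singleton, or_self] at hxg
  exact hg0 (hxg ▸ eq_zero_of_isPMZeroSum_singleton hB.2)

theorem count_zero_add_card_eq_two [DecidableEq G] (hA : IsPMAtom (PMZS G₀) A)
    (h2 : card A ≤ 2) : count 0 A + card A = 2 := by
  have := card_pos.mpr hA.2.1
  rcases (by omega : card A = 1 ∨ card A = 2) with h1 | h2
  · obtain ⟨x, rfl⟩ := card_eq_one.mp h1
    simp [eq_zero_of_isPMZeroSum_singleton hA.1.2]
  · have h0 : (0 : G) ∉ A := fun h0 => by
      simp [eq_singleton_zero_of_isPMAtom hA h0] at h2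
    rw [count_eq_zero_of_notMem h0, h2]

variable {S : AddSubmonoid (Multiset G)}

theorem lengthSet_subsingleton (hdc : IsDivClosed (PMZS G₀) S)
    (hshort : ∀ A, IsPMAtom S A → card A ≤ 2) (a : Multiset G) :
    (LengthSet S a).Subsingleton := by
  classical
  have key : ∀ l : List (Multiset G), (∀ A ∈ l, IsPMAtom S A) →
      count 0 l.sum + card l.sum = 2 * l.length := by
    intro l hl
    induction l with
    | nil => simp
    | cons A t ih =>
      have hA := hl A List.mem_cons_self
      have hA2 := count_zero_add_card_eq_two (hA.of_isDivClosed hdc) (hshort A hA)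
      have ht := ih fun B hB => hl B (List.mem_cons_of_mem A hB)
      simp only [List.sum_cons, List.length_cons, count_add, card_add]
      omega
  rintro _ ⟨l₁, hl₁, rfl, rfl⟩ _ ⟨l₂, hl₂, hsum, rfl⟩
  have h₁ := key l₁ hl₁
  have h₂ := key l₂ hl₂
  rw [hsum] at h₂
  omega

theorem deltaM_eq_empty (hdc : IsDivClosed (PMZS G₀) S)
    (hshort : ∀ A, IsPMAtom S A → card A ≤ 2) : DeltaM S = ∅ :=
  Set.eq_empty_of_forall_notMem fun _ ⟨a, _, hd⟩ => by
    rwa [distSet_eq_empty_of_subsingleton (lengthSet_subsingleton hdc hshort a)] at hd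

theorem card_mem_lengthSet_add_self (hdc : IsDivClosed (PMZS G₀) S) (hA : IsPMAtom S A)
    (h1 : card A ≠ 1) : card A ∈ LengthSet S (A + A) := by
  have hAH := hA.of_isDivClosed hdc
  have hAG₀ := hAH.1.1
  have hnz : ∀ g ∈ A, g ≠ 0 := fun g hg hg0 =>
    h1 (by rw [eq_singleton_zero_of_isPMAtom hAH (hg0 ▸ hg), card_singleton])
  have hpair : ∀ g ∈ A, ({g} + {g} : Multiset G) ∈ S := by
    intro g hg
    obtain ⟨A', rfl⟩ := exists_cons_of_mem hg
    refine hdc.2 _ (add_mem hA.1 hA.1) _ (add_self_mem_PMZS (by simpa using hAG₀ g hg))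
      ⟨A' + A', add_self_mem_PMZS fun x hx => hAG₀ x (mem_cons_of_mem hx), ?_⟩
    rw [← singleton_add]
    exact add_add_add_comm _ _ _ _
  refine ⟨A.toList.map fun g => {g} + {g}, ?_, ?_, by simp⟩
  · simp only [List.mem_map, mem_toList]
    rintro _ ⟨g, hg, rfl⟩
    exact (isPMAtom_pair (hAG₀ g hg) (hnz g hg)).of_le hdc.1 (hpair g hg)
  · rw [← sum_coe, ← map_coe, coe_toList, sum_map_add, sum_map_singleton]

end PlusMinus

/-- For `H = B±(G₀)` with `D(H)` finite, every element of `Δ*(H)` is at most `D(H) - 2`. -/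
theorem stmt_3 (G : Type*) [AddCommGroup G] (G₀ : Set G)
    (hfin : BddAbove (AtomLengths (PMZS G₀))) :
    ∀ d ∈ DeltaStar (PMZS G₀), d ≤ DavD (PMZS G₀) - 2 := by
  rintro _ ⟨S, hdc, hne, rfl⟩
  obtain ⟨A, hA, hA3⟩ : ∃ A, IsPMAtom S A ∧ 3 ≤ card A := by
    by_contra! h
    exact hne.ne_empty (deltaM_eq_empty hdc fun A hA => by have := h A hA; omega)
  obtain ⟨d, hd, hdA⟩ := exists_mem_distSet_le_sub (two_mem_lengthSet_add_self hA)
    (card_mem_lengthSet_add_self hdc hA (by omega)) (by omega)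
  have hmin : sInf (DeltaM S) ≤ d := Nat.sInf_le ⟨A + A, add_mem hA.1 hA.1, hd⟩
  have hAD : card A ≤ DavD (PMZS G₀) := le_csSup hfin ⟨A, hA.of_isDivClosed hdc, rfl⟩
  omega
end

section
/- Let n ∈ ℕ be such that both n and n − 2 are prime (so n is the larger of a pair of twin primes). For H = B±(C_n), where C_n is a cyclic group of order n, one has Δ*(H) = {1, n − 2}. -/
/-!
A divisor-closed submonoid `S` of `B±(G)` is `B±(G₁)`, where `G₁` is the set of elements occurring
in `S`: for `g ∈ s ∈ S` the atom `g²` divides `s²`, and every sequence `X` over `G₁` divides `X²`.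

If `G₁` contains nonzero `g, h` with `h ≠ ±g`, write `h = m g` and `μ = min(m, n - m)`; then
`h g^μ` is an atom, and since `n - 2` is prime an explicit sequence over `{g, h}` has
factorizations of consecutive lengths, so `min Δ = 1`.

Otherwise `G₁ ⊆ {0, g, -g}`. Its atoms are `0`, the pairs `x y` with `y = ±x`, and the sequences
of length `n` over `{g, -g}`, so a factorization of `X` of length `ℓ` with `t` atoms of length `n`
satisfies `2ℓ + (n - 2) t = |X| + v₀(X)`, where `v₀(X)` counts the zeros of `X`. As `n - 2` is
odd, two lengths of `X` differ by a multiple of `n - 2`, and trading two long atoms for `n` pairs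
realises the difference `n - 2`; hence `Δ = {n - 2}`.
-/

open Multiset

variable {G : Type*} [AddCommGroup G]

theorem exists_eq_replicate_of_add_eq_replicate {α : Type*} {S₁ S₂ : Multiset α} {a : α} {N : ℕ}
    (h : S₁ + S₂ = replicate N a) : ∃ k ≤ N, S₁ = replicate k a ∧ S₂ = replicate (N - k) a := by
  obtain ⟨k, hk, rfl⟩ := Multiset.le_replicate_iff.mp (h ▸ Multiset.le_add_right S₁ S₂)
  rw [← Nat.add_sub_cancel' hk, Multiset.replicate_add, add_right_inj] at h
  exact ⟨k, hk, rfl, h⟩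

theorem isPMZeroSum_add_self (S : Multiset G) : IsPMZeroSum (S + S) := ⟨S, S, rfl, rfl⟩

theorem isPMZeroSum_of_sum_eq_zero {S : Multiset G} (h : S.sum = 0) : IsPMZeroSum S :=
  ⟨S, 0, by simp, by simp [h]⟩

theorem isPMZeroSum_cons_iff {x : G} {S : Multiset G} :
    IsPMZeroSum (x ::ₘ S) ↔ ∃ S₁ S₂ : Multiset G, S = S₁ + S₂ ∧ x + S₁.sum = S₂.sum := by
  constructor
  · rintro ⟨T₁, T₂, hT, hsum⟩
    wlog hx : x ∈ T₁ generalizing T₁ T₂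
    · have hx₂ : x ∈ T₂ :=
        (Multiset.mem_add.mp (hT ▸ Multiset.mem_cons_self x S)).resolve_left hx
      exact this T₂ T₁ (by rw [hT, add_comm]) hsum.symm hx₂
    obtain ⟨S₁, rfl⟩ := Multiset.exists_cons_of_mem hx
    refine ⟨S₁, T₂, ?_, by simpa using hsum⟩
    rwa [Multiset.cons_add, Multiset.cons_inj_right] at hT
  · rintro ⟨S₁, S₂, rfl, hsum⟩
    exact ⟨x ::ₘ S₁, S₂, by rw [Multiset.cons_add], by simpa using hsum⟩

theorem isPMZeroSum_zero_cons_iff {S : Multiset G} : IsPMZeroSum (0 ::ₘ S) ↔ IsPMZeroSum S := by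
  simp only [isPMZeroSum_cons_iff, zero_add]
  rfl

theorem isPMZeroSum_neg_cons_iff {x : G} {S : Multiset G} :
    IsPMZeroSum (-x ::ₘ S) ↔ IsPMZeroSum (x ::ₘ S) := by
  suffices ∀ y : G, IsPMZeroSum (-y ::ₘ S) → IsPMZeroSum (y ::ₘ S) from
    ⟨this x, fun h => this (-x) (by rwa [neg_neg])⟩
  intro y h
  obtain ⟨S₁, S₂, rfl, hsum⟩ := isPMZeroSum_cons_iff.mp h
  exact isPMZeroSum_cons_iff.mpr ⟨S₂, S₁, add_comm _ _, by rw [← hsum]; abel⟩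

theorem IsPMZeroSum.eq_zero_of_singleton {x : G} (h : IsPMZeroSum {x}) : x = 0 := by
  obtain ⟨S₁, S₂, hS, hsum⟩ := isPMZeroSum_cons_iff.mp h
  obtain ⟨rfl, rfl⟩ := add_eq_zero.mp hS.symm
  simpa using hsum

theorem isPMZeroSum_replicate_iff {g : G} {N : ℕ} :
    IsPMZeroSum (replicate N g) ↔ ∃ k ≤ N, (addOrderOf g : ℤ) ∣ 2 * k - N := by
  have key : ∀ k ≤ N, ((2 * k - N : ℤ)) • g = k • g - (N - k) • g := fun k hk => by
    rw [← natCast_zsmul, ← natCast_zsmul, ← sub_smul]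
    congr 1
    push_cast [Nat.cast_sub hk]
    ring
  simp only [addOrderOf_dvd_iff_zsmul_eq_zero]
  constructor
  · rintro ⟨S₁, S₂, hS, hsum⟩
    obtain ⟨k, hk, rfl, rfl⟩ := exists_eq_replicate_of_add_eq_replicate hS.symm
    refine ⟨k, hk, ?_⟩
    rw [key k hk, sub_eq_zero]
    simpa [Multiset.sum_replicate] using hsum
  · rintro ⟨k, hk, h⟩
    refine ⟨replicate k g, replicate (N - k) g, ?_, ?_⟩
    · rw [← Multiset.replicate_add, Nat.add_sub_cancel' hk]
    · rw [key k hk, sub_eq_zero] at h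
      simpa [Multiset.sum_replicate] using h

theorem isPMZeroSum_replicate_iff_of_odd {g : G} (hg : Odd (addOrderOf g)) {N : ℕ} :
    IsPMZeroSum (replicate N g) ↔ Even N ∨ addOrderOf g ≤ N := by
  rw [isPMZeroSum_replicate_iff]
  constructor
  · rintro ⟨k, hk, hd⟩
    refine (Nat.even_or_odd N).imp id fun ⟨j, hj⟩ => ?_
    have := Nat.le_of_dvd (by omega) (Int.natCast_dvd.mp hd)
    omega
  · intro h
    obtain ⟨i, hi⟩ := hg
    rcases Nat.even_or_odd N with ⟨j, hj⟩ | ⟨j, hj⟩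
    · exact ⟨j, by omega, ⟨0, by omega⟩⟩
    · have := h.resolve_left (Nat.not_even_iff_odd.mpr ⟨j, hj⟩)
      exact ⟨j - i, by omega, ⟨-1, by omega⟩⟩

theorem isPMZeroSum_iff_replicate {g : G} {S : Multiset G} (hS : ∀ x ∈ S, x = g ∨ x = -g) :
    IsPMZeroSum S ↔ IsPMZeroSum (replicate (card S) g) := by
  suffices ∀ R : Multiset G, IsPMZeroSum (R + S) ↔ IsPMZeroSum (R + replicate (card S) g) by
    simpa using this 0
  induction S using Multiset.induction_on with
  | empty => simp
  | cons x S ih =>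
    intro R
    have hx : IsPMZeroSum (x ::ₘ (R + replicate (card S) g)) ↔
        IsPMZeroSum (g ::ₘ (R + replicate (card S) g)) := by
      rcases hS x (Multiset.mem_cons_self x S) with rfl | rfl
      · rfl
      · exact isPMZeroSum_neg_cons_iff
    rw [Multiset.add_cons, ← Multiset.cons_add, ih (fun y hy => hS y (Multiset.mem_cons_of_mem hy)),
      Multiset.cons_add, hx, Multiset.card_cons, Multiset.replicate_succ, Multiset.add_cons]

theorem isPMZeroSum_iff_even_or_le {g : G} (hg : Odd (addOrderOf g)) {S : Multiset G}
    (hS : ∀ x ∈ S, x = g ∨ x = -g) : IsPMZeroSum S ↔ Even (card S) ∨ addOrderOf g ≤ card S := by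
  rw [isPMZeroSum_iff_replicate hS, isPMZeroSum_replicate_iff_of_odd hg]

theorem IsPMAtom.eq_zero_or_eq_zero {G₁ : Set G} {A B C : Multiset G}
    (hA : IsPMAtom (PMZS G₁) A) (h : A = B + C) (hB : IsPMZeroSum B) (hC : IsPMZeroSum C) :
    B = 0 ∨ C = 0 :=
  hA.2.2 B C ⟨fun x hx => hA.1.1 x (h ▸ Multiset.mem_add.mpr (Or.inl hx)), hB⟩
    ⟨fun x hx => hA.1.1 x (h ▸ Multiset.mem_add.mpr (Or.inr hx)), hC⟩ h

theorem IsPMAtom.eq_singleton_zero {G₁ : Set G} {A : Multiset G} (hA : IsPMAtom (PMZS G₁) A)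
    (h0 : (0 : G) ∈ A) : A = {0} := by
  obtain ⟨A', rfl⟩ := Multiset.exists_cons_of_mem h0
  rcases hA.eq_zero_or_eq_zero (Multiset.singleton_add 0 A').symm
    (isPMZeroSum_of_sum_eq_zero (by simp)) (isPMZeroSum_zero_cons_iff.mp hA.1.2) with h | rfl
  · simp at h
  · rfl

theorem isPMAtom_pair_s8 {G₁ : Set G} {x y : G} (hx : x ≠ 0) (hy : y = x ∨ y = -x)
    (hxG : x ∈ G₁) (hyG : y ∈ G₁) : IsPMAtom (PMZS G₁) {x, y} := by
  have hy0 : y ≠ 0 := by rcases hy with rfl | rfl <;> simpa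
  refine ⟨⟨by simp [hxG, hyG], ?_⟩, by simp, fun B C hB hC hBC => ?_⟩
  · rcases hy with rfl | rfl
    · exact ⟨{y}, {y}, by simp, rfl⟩
    · exact isPMZeroSum_of_sum_eq_zero (by simp)
  by_contra! hne
  have hcard : card B + card C = 2 := by simpa using (congrArg card hBC).symm
  obtain ⟨z, rfl⟩ : ∃ z, B = {z} := Multiset.card_eq_one.mp (by
    have := Multiset.card_pos.mpr hne.1
    have := Multiset.card_pos.mpr hne.2
    omega)
  have hz : z ∈ ({x, y} : Multiset G) := hBC ▸ Multiset.mem_add.mpr (Or.inl (by simp))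
  rw [hB.2.eq_zero_of_singleton] at hz
  simp only [Multiset.insert_eq_cons, Multiset.mem_cons, Multiset.mem_singleton] at hz
  exact hz.elim (fun h => hx h.symm) fun h => hy0 h.symm

theorem isPMAtom_replicate_addOrderOf {G₁ : Set G} {g : G} (hg : Odd (addOrderOf g))
    (hgG : g ∈ G₁) : IsPMAtom (PMZS G₁) (replicate (addOrderOf g) g) := by
  refine ⟨⟨fun x hx => Multiset.eq_of_mem_replicate hx ▸ hgG,
    (isPMZeroSum_replicate_iff_of_odd hg).mpr (Or.inr le_rfl)⟩,
    fun h => hg.pos.ne' (by simpa using congrArg card h), fun B C hB hC hBC => ?_⟩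
  by_contra! hne
  obtain ⟨k, hk, rfl, rfl⟩ := exists_eq_replicate_of_add_eq_replicate hBC.symm
  have hB := (isPMZeroSum_replicate_iff_of_odd hg).mp hB.2
  have hC := (isPMZeroSum_replicate_iff_of_odd hg).mp hC.2
  have hk₁ := Multiset.card_pos.mpr hne.1
  have hk₂ := Multiset.card_pos.mpr hne.2
  simp only [Multiset.card_replicate] at hk₁ hk₂
  obtain ⟨i, hi⟩ := hg
  rcases hB with ⟨b, hb⟩ | hb <;> rcases hC with ⟨c, hc⟩ | hc <;> omega

theorem IsPMZeroSum.exists_zsmul_of_cons_replicate {x g : G} {k : ℕ}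
    (h : IsPMZeroSum (x ::ₘ replicate k g)) : ∃ j : ℤ, |j| ≤ k ∧ x = j • g := by
  obtain ⟨S₁, S₂, hS, hsum⟩ := isPMZeroSum_cons_iff.mp h
  obtain ⟨i, hi, rfl, rfl⟩ := exists_eq_replicate_of_add_eq_replicate hS.symm
  refine ⟨(k - i : ℕ) - i, abs_le.mpr ⟨by omega, by omega⟩, ?_⟩
  rw [sub_smul, natCast_zsmul, natCast_zsmul, eq_sub_iff_add_eq]
  simpa [Multiset.sum_replicate] using hsum

/-- A `±`-zero-sum subsequence `h g^k` forces `h = j • g` with `|j| ≤ k`, and `h` is no such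
multiple for `|j| < μ`; so a `±`-zero-sum factor containing `h` contains all of `g^μ`. -/
theorem isPMAtom_cons_replicate {G₁ : Set G} {g h : G} {m : ℕ} (hm : m < addOrderOf g)
    (hh : h = m • g) (hgG : g ∈ G₁) (hhG : h ∈ G₁) :
    IsPMAtom (PMZS G₁) (h ::ₘ replicate (min m (addOrderOf g - m)) g) := by
  set n := addOrderOf g
  set μ := min m (n - m) with hμ
  have hshort : ∀ j : ℤ, |j| < μ → h ≠ j • g := by
    intro j hj hhj
    have : μ ≤ m ∧ μ ≤ n - m := ⟨min_le_left _ _, min_le_right _ _⟩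
    rw [abs_lt] at hj
    have hdvd : (n : ℤ) ∣ m - j := by
      rw [addOrderOf_dvd_iff_zsmul_eq_zero, sub_smul, natCast_zsmul, ← hh, hhj, sub_self]
    have := Int.le_of_dvd (by omega) hdvd
    omega
  refine ⟨⟨fun x hx => ?_, isPMZeroSum_cons_iff.mpr ?_⟩, Multiset.cons_ne_zero,
    fun B C hB hC hBC => ?_⟩
  · rcases Multiset.mem_cons.mp hx with rfl | hx
    exacts [hhG, Multiset.eq_of_mem_replicate hx ▸ hgG]
  · rcases min_choice m (n - m) with hμm | hμm
    · exact ⟨0, replicate μ g, by simp, by simp [Multiset.sum_replicate, hh, hμ, hμm]⟩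
    · refine ⟨replicate μ g, 0, by simp, ?_⟩
      rw [Multiset.sum_replicate, hμ, hμm, hh, ← add_nsmul, Nat.add_sub_cancel' hm.le,
        addOrderOf_nsmul_eq_zero, Multiset.sum_zero]
  wlog hhC : h ∈ C generalizing B C
  · have hhB : h ∈ B :=
      (Multiset.mem_add.mp (hBC ▸ Multiset.mem_cons_self h _)).resolve_right hhC
    exact (this C B hC hB (by rw [hBC, add_comm]) hhB).symm
  obtain ⟨C', rfl⟩ := Multiset.exists_cons_of_mem hhC
  rw [Multiset.add_cons, Multiset.cons_inj_right] at hBC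
  obtain ⟨k, hk, rfl, rfl⟩ := exists_eq_replicate_of_add_eq_replicate hBC.symm
  obtain ⟨j, hj, hhj⟩ := hC.2.exists_zsmul_of_cons_replicate
  have hk0 : k = 0 := by
    by_contra hk0
    exact hshort j (hj.trans_lt (by omega)) hhj
  left
  rw [hk0, Multiset.replicate_zero]

section LengthSet

variable {α : Type*} {H : AddSubmonoid (Multiset α)}

theorem length_mem_lengthSet {l : List (Multiset α)} (hl : ∀ A ∈ l, IsPMAtom H A) :
    l.length ∈ LengthSet H l.sum :=
  ⟨l, hl, rfl, rfl⟩

theorem mem_of_mem_lengthSet {a : Multiset α} {k : ℕ} (h : k ∈ LengthSet H a) : a ∈ H := by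
  obtain ⟨l, hl, rfl, -⟩ := h
  exact H.list_sum_mem fun A hA => (hl A hA).1

theorem one_mem_lengthSet {A : Multiset α} (hA : IsPMAtom H A) : 1 ∈ LengthSet H A :=
  ⟨[A], by simpa using hA, by simp, rfl⟩

theorem nsmul_mem_lengthSet {A : Multiset α} (hA : IsPMAtom H A) (k : ℕ) :
    k ∈ LengthSet H (k • A) :=
  ⟨List.replicate k A, fun _ hB => List.eq_of_mem_replicate hB ▸ hA, by simp, by simp⟩

theorem add_mem_lengthSet {a b : Multiset α} {k l : ℕ} (ha : k ∈ LengthSet H a)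
    (hb : l ∈ LengthSet H b) : k + l ∈ LengthSet H (a + b) := by
  obtain ⟨la, hla, rfl, rfl⟩ := ha
  obtain ⟨lb, hlb, rfl, rfl⟩ := hb
  refine ⟨la ++ lb, fun A hA => ?_, List.sum_append, List.length_append⟩
  exact (List.mem_append.mp hA).elim (hla A) (hlb A)

theorem one_mem_deltaM {a : Multiset α} {k : ℕ} (hk : k ∈ LengthSet H a)
    (hk₁ : k + 1 ∈ LengthSet H a) : 1 ∈ DeltaM H :=
  ⟨a, mem_of_mem_lengthSet hk, one_pos, k, hk, hk₁, fun _ _ h => h⟩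

theorem sInf_deltaM_eq_one (h : 1 ∈ DeltaM H) : sInf (DeltaM H) = 1 := by
  obtain ⟨-, -, hpos, -⟩ := Nat.sInf_mem ⟨1, h⟩
  exact le_antisymm (Nat.sInf_le h) hpos

end LengthSet

theorem isDivClosed_PMZS {G₁ G₂ : Set G} (h : G₁ ⊆ G₂) : IsDivClosed (PMZS G₂) (PMZS G₁) :=
  ⟨fun _ hX => ⟨fun x hx => h (hX.1 x hx), hX.2⟩, fun _ hs _ ha ⟨_, _, hsc⟩ =>
    ⟨fun x hx => hs.1 x (hsc ▸ Multiset.mem_add.mpr (Or.inl hx)), ha.2⟩⟩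

def seqSupport (S : AddSubmonoid (Multiset G)) : Set G :=
  {g | ∃ s ∈ S, g ∈ s}

theorem IsDivClosed.eq_PMZS_seqSupport {S : AddSubmonoid (Multiset G)}
    (hS : IsDivClosed (PMZS Set.univ) S) : S = PMZS (seqSupport S) := by
  have mem_univ : ∀ {X : Multiset G}, IsPMZeroSum X → X ∈ PMZS Set.univ :=
    fun hX => ⟨fun _ _ => trivial, hX⟩
  have hpair : ∀ g ∈ seqSupport S, {g} + {g} ∈ S := by
    rintro g ⟨s, hs, hgs⟩
    obtain ⟨t, rfl⟩ := Multiset.exists_cons_of_mem hgs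
    refine hS.2 _ (add_mem hs hs) _ (mem_univ (isPMZeroSum_add_self _))
      ⟨t + t, mem_univ (isPMZeroSum_add_self t), ?_⟩
    rw [← Multiset.singleton_add]
    abel
  have hdouble : ∀ X : Multiset G, (∀ x ∈ X, x ∈ seqSupport S) → X + X ∈ S := by
    intro X
    induction X using Multiset.induction_on with
    | empty => simp
    | cons x X ih =>
      intro hX
      convert add_mem (hpair x (hX x (Multiset.mem_cons_self x X)))
        (ih fun y hy => hX y (Multiset.mem_cons_of_mem hy)) using 1
      rw [← Multiset.singleton_add]
      abel
  ext X
  refine ⟨fun hX => ⟨fun x hx => ⟨X, hX, hx⟩, (hS.1 hX).2⟩, fun ⟨hmem, hpm⟩ => ?_⟩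
  exact hS.2 _ (hdouble X hmem) X (mem_univ hpm) ⟨X, mem_univ hpm, rfl⟩

theorem Nat.le_sub_and_two_le_of_two_mul_add_mul_eq {d x y a b : ℕ} (hd : Odd d)
    (h : 2 * x + d * a = 2 * y + d * b) (hxy : x < y) : d ≤ y - x ∧ 2 ≤ a := by
  have hba : b < a := by
    by_contra! hab
    have := Nat.mul_le_mul_left d hab
    omega
  obtain ⟨t, rfl⟩ := Nat.exists_eq_add_of_lt hba
  rw [Nat.mul_add, Nat.mul_add] at h
  have ht : 2 ∣ t + 1 :=
    (Nat.coprime_two_left.mpr hd).dvd_of_dvd_mul_left ⟨y - x, by rw [Nat.mul_add]; omega⟩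
  have := Nat.mul_le_mul_left d (Nat.le_of_dvd (by omega) ht)
  rw [Nat.mul_add] at this
  omega

theorem three_le_addOrderOf {g : G} (hg : Odd (addOrderOf g)) (hg0 : g ≠ 0) :
    3 ≤ addOrderOf g := by
  have := mt AddMonoid.addOrderOf_eq_one_iff.mp hg0
  obtain ⟨i, hi⟩ := hg
  omega

theorem mem_lengthSet_of_card_eq_two_mul {G₁ : Set G} {g : G} (hg0 : g ≠ 0) {S : Multiset G}
    (hS : ∀ x ∈ S, x = g ∨ x = -g) (hSG : ∀ x ∈ S, x ∈ G₁) {k : ℕ} (hk : card S = 2 * k) :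
    k ∈ LengthSet (PMZS G₁) S := by
  induction k generalizing S with
  | zero =>
    rw [Multiset.card_eq_zero.mp hk]
    exact ⟨[], by simp, rfl, rfl⟩
  | succ k ih =>
    obtain ⟨x, hx⟩ := (Multiset.card_pos_iff_exists_mem (s := S)).mp (by omega)
    obtain ⟨S', rfl⟩ := Multiset.exists_cons_of_mem hx
    obtain ⟨y, hy⟩ := (Multiset.card_pos_iff_exists_mem (s := S')).mp (by simp at hk; omega)
    obtain ⟨R, rfl⟩ := Multiset.exists_cons_of_mem hy
    have hxy : x ≠ 0 ∧ (y = x ∨ y = -x) := by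
      rcases hS x (by simp) with rfl | rfl <;> rcases hS y (by simp) with rfl | rfl <;> simp [hg0]
    have hpair := isPMAtom_pair_s8 hxy.1 hxy.2 (hSG x (by simp)) (hSG y (by simp))
    have hR := ih (S := R) (fun z hz => hS z (by simp [hz])) (fun z hz => hSG z (by simp [hz]))
      (by simp at hk; omega)
    rw [add_comm]
    simpa using add_mem_lengthSet (one_mem_lengthSet hpair) hR

section ZeroAndPair

variable {g : G} {G₁ : Set G}

theorem eq_or_eq_neg_of_zero_notMem (hG : G₁ ⊆ {0, g, -g}) {A : Multiset G}
    (hAG : ∀ x ∈ A, x ∈ G₁) (h0 : (0 : G) ∉ A) : ∀ x ∈ A, x = g ∨ x = -g := fun x hx => by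
  rcases hG (hAG x hx) with rfl | hx' | hx'
  exacts [absurd hx h0, Or.inl hx', Or.inr hx']

theorem IsPMAtom.eq_singleton_zero_or_card (hg : Odd (addOrderOf g)) (hg0 : g ≠ 0)
    (hG : G₁ ⊆ {0, g, -g}) {A : Multiset G} (hA : IsPMAtom (PMZS G₁) A) :
    A = {0} ∨ (0 : G) ∉ A ∧ (card A = 2 ∨ card A = addOrderOf g) := by
  by_cases h0 : (0 : G) ∈ A
  · exact Or.inl (hA.eq_singleton_zero h0)
  refine Or.inr ⟨h0, ?_⟩
  have hAg := eq_or_eq_neg_of_zero_notMem hG hA.1.1 h0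
  have hpm := (isPMZeroSum_iff_even_or_le hg hAg).mp hA.1.2
  have h3 := three_le_addOrderOf hg hg0
  have hpos := Multiset.card_pos.mpr hA.2.1
  obtain ⟨i, hi⟩ := hg
  by_cases hc : card A ≤ 2
  · rcases hpm with ⟨j, hj⟩ | hj <;> omega
  obtain ⟨x, hx⟩ := Multiset.card_pos_iff_exists_mem.mp hpos
  obtain ⟨A', rfl⟩ := Multiset.exists_cons_of_mem hx
  obtain ⟨y, hy⟩ := (Multiset.card_pos_iff_exists_mem (s := A')).mp (by simp at hc; omega)
  obtain ⟨R, rfl⟩ := Multiset.exists_cons_of_mem hy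
  have hsub : ∀ {T : Multiset G}, T ≤ x ::ₘ y ::ₘ R → ∀ z ∈ T, z = g ∨ z = -g :=
    fun hT z hz => hAg z (Multiset.mem_of_le hT hz)
  have hxy : IsPMZeroSum {x, y} := (isPMZeroSum_iff_even_or_le ⟨i, hi⟩
    (hsub (by simp [Multiset.insert_eq_cons, Multiset.cons_le_cons_iff]))).mpr (Or.inl (by simp))
  have hR : ¬ IsPMZeroSum R := fun hR => by
    rcases hA.eq_zero_or_eq_zero (by simp) hxy hR with h | rfl
    · simp at h
    · simp at hc
  rw [isPMZeroSum_iff_even_or_le ⟨i, hi⟩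
    (hsub ((R.le_cons_self y).trans (Multiset.le_cons_self _ x)))] at hR
  simp only [Multiset.card_cons] at hpm hR ⊢
  rcases hpm with ⟨j, hj⟩ | hj
  · exact absurd (Or.inl ⟨j - 1, by omega⟩) hR
  · right
    rcases Nat.even_or_odd (card R) with ⟨j, hj'⟩ | ⟨j, hj'⟩
    · exact absurd (Or.inl ⟨j, hj'⟩) hR
    · have := not_or.mp hR
      omega

theorem two_mul_length_add_eq [DecidableEq G] (hg : Odd (addOrderOf g)) (hg0 : g ≠ 0)
    (hG : G₁ ⊆ {0, g, -g}) {l : List (Multiset G)} (hl : ∀ A ∈ l, IsPMAtom (PMZS G₁) A) :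
    2 * l.length + (addOrderOf g - 2) * l.countP (fun A => card A = addOrderOf g) =
      count 0 l.sum + card l.sum := by
  induction l with
  | nil => simp
  | cons A l ih =>
    have ih := ih fun B hB => hl B (List.mem_cons_of_mem A hB)
    have h3 := three_le_addOrderOf hg hg0
    simp only [List.countP_cons, List.sum_cons, List.length_cons, Multiset.count_add,
      Multiset.card_add, decide_eq_true_eq, Nat.mul_add]
    rcases (hl A List.mem_cons_self).eq_singleton_zero_or_card hg hg0 hG with rfl | ⟨h0, hA | hA⟩
    · simp only [Multiset.card_singleton, Multiset.count_singleton_self]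
      rw [if_neg (by omega)]
      omega
    · rw [Multiset.count_eq_zero.mpr h0, hA, if_neg (by omega)]
      omega
    · rw [Multiset.count_eq_zero.mpr h0, hA, if_pos rfl]
      omega

theorem IsPMAtom.eq_or_eq_neg_of_card_eq (hg : Odd (addOrderOf g)) (hg0 : g ≠ 0)
    (hG : G₁ ⊆ {0, g, -g}) {A : Multiset G} (hA : IsPMAtom (PMZS G₁) A)
    (hcard : card A = addOrderOf g) : ∀ x ∈ A, x = g ∨ x = -g := by
  rcases hA.eq_singleton_zero_or_card hg hg0 hG with rfl | ⟨h0, -⟩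
  · have := three_le_addOrderOf hg hg0
    simp only [Multiset.card_singleton] at hcard
    omega
  · exact eq_or_eq_neg_of_zero_notMem hG hA.1.1 h0

theorem le_sub_and_two_le_countP_of_sum_eq (hg : Odd (addOrderOf g)) (hg0 : g ≠ 0)
    (hG : G₁ ⊆ {0, g, -g}) {l₁ l₂ : List (Multiset G)} (hl₁ : ∀ A ∈ l₁, IsPMAtom (PMZS G₁) A)
    (hl₂ : ∀ A ∈ l₂, IsPMAtom (PMZS G₁) A) (hsum : l₁.sum = l₂.sum)
    (hlen : l₁.length < l₂.length) :
    addOrderOf g - 2 ≤ l₂.length - l₁.length ∧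
      2 ≤ l₁.countP (fun A => card A = addOrderOf g) := by
  classical
  have h3 := three_le_addOrderOf hg hg0
  obtain ⟨i, hi⟩ := hg
  refine Nat.le_sub_and_two_le_of_two_mul_add_mul_eq
    (b := l₂.countP (fun A => card A = addOrderOf g)) ⟨i - 1, by omega⟩ ?_ hlen
  rw [two_mul_length_add_eq ⟨i, hi⟩ hg0 hG hl₁, two_mul_length_add_eq ⟨i, hi⟩ hg0 hG hl₂, hsum]

theorem length_add_mem_lengthSet (hg : Odd (addOrderOf g)) (hg0 : g ≠ 0)
    (hG : G₁ ⊆ {0, g, -g}) {l : List (Multiset G)} (hl : ∀ A ∈ l, IsPMAtom (PMZS G₁) A)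
    (hlong : 2 ≤ l.countP (fun A => card A = addOrderOf g)) :
    l.length + (addOrderOf g - 2) ∈ LengthSet (PMZS G₁) l.sum := by
  set p : Multiset G → Bool := fun A => card A = addOrderOf g
  have hperm := List.filter_append_perm p l
  obtain ⟨A₁, A₂, L, hL⟩ : ∃ A₁ A₂ L, l.filter p = A₁ :: A₂ :: L := by
    rw [List.countP_eq_length_filter] at hlong
    match l.filter p, hlong with
    | A₁ :: A₂ :: L, _ => exact ⟨A₁, A₂, L, rfl⟩
  have hfilter : ∀ A ∈ l.filter p, IsPMAtom (PMZS G₁) A ∧ card A = addOrderOf g := fun A hA =>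
    ⟨hl A (List.mem_of_mem_filter hA), by simpa [p] using (List.mem_filter.mp hA).2⟩
  obtain ⟨hA₁, hc₁⟩ := hfilter A₁ (by simp [hL])
  obtain ⟨hA₂, hc₂⟩ := hfilter A₂ (by simp [hL])
  have hpair : addOrderOf g ∈ LengthSet (PMZS G₁) (A₁ + A₂) :=
    mem_lengthSet_of_card_eq_two_mul hg0
      (fun x hx => (Multiset.mem_add.mp hx).elim
        (hA₁.eq_or_eq_neg_of_card_eq hg hg0 hG hc₁ x) (hA₂.eq_or_eq_neg_of_card_eq hg hg0 hG hc₂ x))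
      (fun x hx => (Multiset.mem_add.mp hx).elim (hA₁.1.1 x) (hA₂.1.1 x))
      (by rw [Multiset.card_add, hc₁, hc₂, two_mul])
  rw [hL] at hperm
  set R := L ++ l.filter (fun A => !p A)
  have hrest := length_mem_lengthSet (H := PMZS G₁) (l := R) fun A hA =>
    hl A (hperm.subset (List.mem_cons_of_mem _ (List.mem_cons_of_mem _ hA)))
  have h3 := three_le_addOrderOf hg hg0
  convert add_mem_lengthSet hpair hrest using 1
  · rw [← hperm.sum_eq]
    simp [R, add_assoc]
  · rw [← hperm.length_eq]
    simp [R]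
    omega

theorem sub_le_sub_of_mem_lengthSet (hg : Odd (addOrderOf g)) (hg0 : g ≠ 0)
    (hG : G₁ ⊆ {0, g, -g}) {X : Multiset G} {x y : ℕ} (hx : x ∈ LengthSet (PMZS G₁) X)
    (hy : y ∈ LengthSet (PMZS G₁) X) (hxy : x < y) : addOrderOf g - 2 ≤ y - x := by
  obtain ⟨l₁, hl₁, rfl, rfl⟩ := hx
  obtain ⟨l₂, hl₂, hsum, rfl⟩ := hy
  exact (le_sub_and_two_le_countP_of_sum_eq hg hg0 hG hl₁ hl₂ hsum.symm hxy).1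

theorem add_sub_two_mem_lengthSet (hg : Odd (addOrderOf g)) (hg0 : g ≠ 0)
    (hG : G₁ ⊆ {0, g, -g}) {X : Multiset G} {x y : ℕ} (hx : x ∈ LengthSet (PMZS G₁) X)
    (hy : y ∈ LengthSet (PMZS G₁) X) (hxy : x < y) :
    x + (addOrderOf g - 2) ∈ LengthSet (PMZS G₁) X := by
  obtain ⟨l₁, hl₁, rfl, rfl⟩ := hx
  obtain ⟨l₂, hl₂, hsum, rfl⟩ := hy
  exact length_add_mem_lengthSet hg hg0 hG hl₁
    (le_sub_and_two_le_countP_of_sum_eq hg hg0 hG hl₁ hl₂ hsum.symm hxy).2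

theorem deltaM_subset_singleton (hg : Odd (addOrderOf g)) (hg0 : g ≠ 0)
    (hG : G₁ ⊆ {0, g, -g}) : DeltaM (PMZS G₁) ⊆ {addOrderOf g - 2} := by
  rintro d ⟨X, -, hd, x, hx, hxd, hmin⟩
  have h3 := three_le_addOrderOf hg hg0
  have hle := sub_le_sub_of_mem_lengthSet hg hg0 hG hx hxd (by omega)
  have hge := hmin _ (add_sub_two_mem_lengthSet hg hg0 hG hx hxd (by omega)) (by omega)
  rw [Set.mem_singleton_iff]
  omega

theorem sub_two_mem_deltaM (hg : Odd (addOrderOf g)) (hg0 : g ≠ 0) (hG : G₁ ⊆ {0, g, -g})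
    (hgG : g ∈ G₁) : addOrderOf g - 2 ∈ DeltaM (PMZS G₁) := by
  have h3 := three_le_addOrderOf hg hg0
  have h2 := nsmul_mem_lengthSet (isPMAtom_replicate_addOrderOf hg hgG) 2
  have hn : addOrderOf g ∈ LengthSet (PMZS G₁) (2 • replicate (addOrderOf g) g) :=
    mem_lengthSet_of_card_eq_two_mul hg0
      (fun x hx => Or.inl (Multiset.eq_of_mem_replicate (Multiset.mem_nsmul.mp hx).2))
      (fun x hx => Multiset.eq_of_mem_replicate (Multiset.mem_nsmul.mp hx).2 ▸ hgG)
      (by simp [mul_comm])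
  refine ⟨_, mem_of_mem_lengthSet h2, by omega, 2, h2, by rwa [Nat.add_sub_cancel' (by omega)],
    fun y hy h2y => ?_⟩
  have := sub_le_sub_of_mem_lengthSet hg hg0 hG h2 hy h2y
  omega

theorem deltaM_eq_singleton (hg : Odd (addOrderOf g)) (hg0 : g ≠ 0) (hG : G₁ ⊆ {0, g, -g})
    (hgG : g ∈ G₁) : DeltaM (PMZS G₁) = {addOrderOf g - 2} :=
  (Set.nonempty_of_mem (sub_two_mem_deltaM hg hg0 hG hgG)).subset_singleton_iff.mp
    (deltaM_subset_singleton hg hg0 hG)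

end ZeroAndPair

theorem Nat.Prime.exists_mul_eq_mul_add_one {p w : ℕ} (hp : p.Prime) (hw : 0 < w) (hwp : w < p) :
    ∃ u v : ℕ, w * u = p * v + 1 := by
  obtain ⟨u, -, hu⟩ := Nat.exists_mul_mod_eq_one_of_coprime
    (hp.coprime_iff_not_dvd.mpr (Nat.not_dvd_of_pos_of_lt hw hwp)).symm hp.one_lt
  exact ⟨u, w * u / p, by have := Nat.div_add_mod (w * u) p; omega⟩

/-- With `n = addOrderOf g` and `μ = min m (n - m)`, the sequence
`(h g^μ)^(2u) (g²)^(vn) = (g²)^(uμ) (h²)^u (g^n)^(2v)` has factorizations of lengths `2u + vn`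
and `uμ + u + 2v`, which are consecutive once `(μ - 1) u = (n - 2) v + 1`: this is solvable
because `n - 2` is prime. -/
theorem one_mem_deltaM_of_nsmul_eq {G₁ : Set G} {g h : G} {m : ℕ} (hg : Odd (addOrderOf g))
    (hp : (addOrderOf g - 2).Prime) (hgG : g ∈ G₁) (hhG : h ∈ G₁) (hh : h = m • g)
    (hm : 2 ≤ m) (hmn : m + 2 ≤ addOrderOf g) : 1 ∈ DeltaM (PMZS G₁) := by
  set n := addOrderOf g
  set μ := min m (n - m) with hμ
  have : μ ≤ m ∧ μ ≤ n - m := ⟨min_le_left _ _, min_le_right _ _⟩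
  obtain ⟨u, v, huv⟩ := hp.exists_mul_eq_mul_add_one (w := μ - 1) (by omega) (by omega)
  have hg0 : g ≠ 0 := by
    rintro rfl
    simp [n] at hmn
  have hh0 : h ≠ 0 := hh ▸ nsmul_ne_zero_of_lt_addOrderOf (by omega) (by omega)
  have hW := isPMAtom_cons_replicate (by omega) hh hgG hhG
  have hg2 := isPMAtom_pair_s8 hg0 (Or.inl rfl) hgG hgG
  have hh2 := isPMAtom_pair_s8 hh0 (Or.inl rfl) hhG hhG
  have hgn := isPMAtom_replicate_addOrderOf hg hgG
  have h₁ := add_mem_lengthSet (nsmul_mem_lengthSet hW (2 * u)) (nsmul_mem_lengthSet hg2 (v * n))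
  have h₂ := add_mem_lengthSet (add_mem_lengthSet (nsmul_mem_lengthSet hg2 (u * μ))
    (nsmul_mem_lengthSet hh2 u)) (nsmul_mem_lengthSet hgn (2 * v))
  have hX : (2 * u) • (h ::ₘ replicate μ g) + (v * n) • {g, g} =
      (u * μ) • {g, g} + u • {h, h} + (2 * v) • replicate n g := by
    classical
    ext a
    simp only [Multiset.count_add, Multiset.count_nsmul, Multiset.count_cons,
      Multiset.count_replicate, Multiset.insert_eq_cons, Multiset.count_singleton, eq_comm (a := g)]
    split_ifs <;> ring
  have hlen : u * μ + u + 2 * v = 2 * u + v * n + 1 := by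
    zify [show 1 ≤ μ by omega, show 2 ≤ n by omega] at huv ⊢
    linear_combination huv
  rw [hX] at h₁
  rw [hlen] at h₂
  exact one_mem_deltaM h₁ h₂

theorem two_le_and_add_two_le_of_nsmul_eq {g h : G} {m : ℕ} (hm : m < addOrderOf g)
    (hh : h = m • g) (h0 : h ≠ 0) (hhg : h ≠ g) (hhng : h ≠ -g) :
    2 ≤ m ∧ m + 2 ≤ addOrderOf g := by
  have : m ≠ 0 := by rintro rfl; exact h0 (by simpa using hh)
  have : m ≠ 1 := by rintro rfl; exact hhg (by simpa using hh)
  have : m ≠ addOrderOf g - 1 := by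
    rintro rfl
    refine hhng (hh.trans (eq_neg_of_add_eq_zero_left ?_))
    rw [← succ_nsmul, Nat.sub_add_cancel (by omega), addOrderOf_nsmul_eq_zero]
  omega

theorem exists_pair_or_subset [Nontrivial G] (G₁ : Set G) :
    (∃ g ∈ G₁, ∃ h ∈ G₁, g ≠ 0 ∧ h ≠ 0 ∧ h ≠ g ∧ h ≠ -g) ∨ ∃ g ≠ (0 : G), G₁ ⊆ {0, g, -g} := by
  by_cases hpair : ∃ g ∈ G₁, ∃ h ∈ G₁, g ≠ 0 ∧ h ≠ 0 ∧ h ≠ g ∧ h ≠ -g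
  · exact Or.inl hpair
  refine Or.inr ?_
  by_cases hz : ∃ g ∈ G₁, g ≠ 0
  · obtain ⟨g, hgG, hg⟩ := hz
    refine ⟨g, hg, fun h hh => ?_⟩
    by_contra hne
    simp only [Set.mem_insert_iff, Set.mem_singleton_iff, not_or] at hne
    exact hpair ⟨g, hgG, h, hh, hg, hne.1, hne.2.1, hne.2.2⟩
  · obtain ⟨g, hg⟩ := exists_ne (0 : G)
    refine ⟨g, hg, fun h hh => ?_⟩
    rw [not_not.mp fun hne => hz ⟨h, hh, hne⟩]
    exact Set.mem_insert 0 _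

theorem ZMod.exists_lt_nsmul_eq {p : ℕ} [Fact p.Prime] {g : ZMod p} (hg : g ≠ 0) (h : ZMod p) :
    ∃ m < p, h = m • g :=
  ⟨(h * g⁻¹).val, ZMod.val_lt _, by
    rw [nsmul_eq_mul, ZMod.natCast_zmod_val, mul_assoc, inv_mul_cancel₀ hg, mul_one]⟩

theorem ZMod.addOrderOf_eq_of_ne_zero {p : ℕ} [Fact p.Prime] {g : ZMod p} (hg : g ≠ 0) :
    addOrderOf g = p :=
  addOrderOf_eq_prime (by simp) hg

theorem ZMod.sInf_deltaM_PMZS_eq_one_or_eq_sub_two {p : ℕ} [Fact p.Prime] (hodd : Odd p)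
    (hp2 : (p - 2).Prime) {G₁ : Set (ZMod p)} (hne : (DeltaM (PMZS G₁)).Nonempty) :
    sInf (DeltaM (PMZS G₁)) = 1 ∨ sInf (DeltaM (PMZS G₁)) = p - 2 := by
  rcases exists_pair_or_subset G₁ with ⟨g, hgG, h, hhG, hg, hh0, hhg, hhng⟩ | ⟨g, hg, hsub⟩
  · obtain ⟨m, hm, rfl⟩ := ZMod.exists_lt_nsmul_eq hg h
    rw [← ZMod.addOrderOf_eq_of_ne_zero hg] at hm hp2 hodd
    obtain ⟨hm2, hmn⟩ := two_le_and_add_two_le_of_nsmul_eq hm rfl hh0 hhg hhng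
    exact Or.inl (sInf_deltaM_eq_one (one_mem_deltaM_of_nsmul_eq hodd hp2 hgG hhG rfl hm2 hmn))
  · rw [← ZMod.addOrderOf_eq_of_ne_zero hg] at hodd
    rw [hne.subset_singleton_iff.mp (deltaM_subset_singleton hodd hg hsub), csInf_singleton,
      ZMod.addOrderOf_eq_of_ne_zero hg]
    exact Or.inr rfl

/-- If `n` and `n - 2` are both prime, then for `H = B±(C_n)` one has `Δ*(H) = {1, n - 2}`. -/
theorem stmt_8 (n : ℕ) (hn : n.Prime) (hn2 : (n - 2).Prime) :
    DeltaStar (PMZS (Set.univ : Set (ZMod n))) = {1, n - 2} := by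
  have : Fact n.Prime := ⟨hn⟩
  have hn5 : 5 ≤ n := by
    have := hn2.two_le
    have : n ≠ 4 := by rintro rfl; norm_num at hn
    omega
  have hodd : Odd n := hn.odd_of_ne_two (by omega)
  have h1 : (1 : ZMod n) ≠ 0 := one_ne_zero
  have horder := ZMod.addOrderOf_eq_of_ne_zero h1
  ext d
  constructor
  · rintro ⟨S, hS, hne, rfl⟩
    rw [hS.eq_PMZS_seqSupport] at hne ⊢
    exact ZMod.sInf_deltaM_PMZS_eq_one_or_eq_sub_two hodd hn2 hne
  rintro (rfl | rfl)
  · have hδ := one_mem_deltaM_of_nsmul_eq (G₁ := Set.univ) (by rwa [horder]) (by rwa [horder])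
      trivial trivial rfl le_rfl (by rw [horder]; omega)
    exact ⟨_, isDivClosed_PMZS subset_rfl, ⟨1, hδ⟩, (sInf_deltaM_eq_one hδ).symm⟩
  · have hΔ := deltaM_eq_singleton (by rwa [horder]) h1 (G₁ := {1}) (by simp) rfl
    rw [horder] at hΔ
    exact ⟨PMZS {1}, isDivClosed_PMZS (Set.subset_univ _), by simp [hΔ], by simp [hΔ]⟩
end
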